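/- arXiv:1304.5254 — 2 statements merged into one kernel-verified Lean document; each statement's English description precedes it below -/
import Mathlib

section
/- Let ε be an equivalence relation on a set X, and let ⟨ε⟩ be the subgroup of the free Boolean group B(X) (the direct sum of copies of ℤ/2ℤ indexed by X, with X embedded via x ↦ single basis element) generated by {x + y : (x,y) ∈ ε}. Then for x, y ∈ X: x + y ∈ ⟨ε⟩ if and only if (x,y) ∈ ε. -/
/-- Let `r` be an equivalence relation on `X` and `⟨r⟩` the subgroup of the
free Boolean group `B(X) = X →₀ ZMod 2` generated by `{x + y : r x y}`. Then for
`x y : X`, `x + y ∈ ⟨r⟩ ↔ r x y`. -/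
theorem mem_equivRel_subgroup_iff {X : Type*} (r : X → X → Prop) (hr : Equivalence r)
    (x y : X) :
    Finsupp.single x (1 : ZMod 2) + Finsupp.single y (1 : ZMod 2) ∈
      AddSubgroup.closure {f : X →₀ ZMod 2 | ∃ a b : X, r a b ∧
        f = Finsupp.single a (1 : ZMod 2) + Finsupp.single b (1 : ZMod 2)} ↔
    r x y := by
  constructor
  · intro h
    letI s : Setoid X := ⟨r, hr⟩
    let φ : (X →₀ ZMod 2) →+ (Quotient s →₀ ZMod 2) :=
      Finsupp.mapDomain.addMonoidHom (Quotient.mk s)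
    have hker : AddSubgroup.closure {f : X →₀ ZMod 2 | ∃ a b : X, r a b ∧
        f = Finsupp.single a (1 : ZMod 2) + Finsupp.single b (1 : ZMod 2)} ≤ φ.ker := by
      rw [AddSubgroup.closure_le]
      rintro f ⟨a, b, hab, rfl⟩
      have hq : (Quotient.mk s a) = Quotient.mk s b := Quotient.sound hab
      simp only [AddMonoidHom.mem_ker, SetLike.mem_coe, φ, map_add,
        Finsupp.mapDomain.addMonoidHom_apply, Finsupp.mapDomain_single, hq]
      rw [← Finsupp.single_add]
      norm_num
      rfl
    have h0 : φ (Finsupp.single x (1 : ZMod 2) + Finsupp.single y (1 : ZMod 2)) = 0 :=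
      hker h
    by_contra hxy
    have hne : (Quotient.mk s x) ≠ Quotient.mk s y := fun he => hxy (Quotient.exact he)
    simp only [φ, Finsupp.mapDomain.addMonoidHom_apply, map_add, Finsupp.mapDomain_single] at h0
    have heval := congrArg (fun g : Quotient s →₀ ZMod 2 => g (Quotient.mk s x)) h0
    simp [Finsupp.single_apply, Ne.symm hne] at heval
  · intro h
    exact AddSubgroup.subset_closure ⟨x, y, h, rfl⟩
end

section
/- Let (X̄, d) be an ultra-metric space with a distinguished point 0, and let B(X) be the free Boolean group on X = X̄ \ {0}, identified with finite subsets of X under symmetric difference. For u ∈ B(X), define ‖u‖ as the infimum over all finite families of pairs {(x₁,x₂),…,(x_{2n−1},x_{2n})} in X̄ with u = Σ (x_{2i−1} + x_{2i}) (computed in B(X) with 0 mapped to the zero element) of max_i d(x_{2i−1}, x_{2i}). Then ‖·‖ is an ultra-norm on B(X): ‖0‖=0, ‖u‖>0 for u ≠ 0, and ‖u+v‖ ≤ max{‖u‖,‖v‖}. -/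
/-!
The norm of `u + v` is at most the larger norm because concatenating configurations of `u` and
`v` gives one of `u + v`. For positivity, pick `x` in the support of `u` and `r > 0` so small that
the ball `B(x, r)` contains neither `0` nor any other point of the support of `u`. In an
ultra-metric space a pair at distance `< r` has both points in `B(x, r)` or neither, so the
parity of the number of points in `B(x, r)` vanishes on every configuration of `d`-length `< r`,
whereas on `u` it is `u x = 1`.
-/

/-- The canonical map from `X̄` to the free Boolean group `B(X)` over `X = X̄ \ {z}`,
sending the distinguished point `z` to the zero element. -/
noncomputable def boolEmb {Xb : Type*} [DecidableEq Xb] (z : Xb) (x : Xb) :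
    ({ y : Xb // y ≠ z } →₀ ZMod 2) :=
  if h : x = z then 0 else Finsupp.single ⟨x, h⟩ (1 : ZMod 2)

/-- The `d`-length of a configuration: the maximum of the distances of its pairs. -/
noncomputable def confLength {Xb : Type*} [MetricSpace Xb] (L : List (Xb × Xb)) : ℝ :=
  (L.map fun p => dist p.1 p.2).foldr max 0

/-- The Graev-type ultra-norm: the infimum of the `d`-lengths of the configurations
representing `u`. -/
noncomputable def graevNorm {Xb : Type*} [MetricSpace Xb] [DecidableEq Xb] (z : Xb)
    (u : { y : Xb // y ≠ z } →₀ ZMod 2) : ℝ :=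
  sInf {r : ℝ | ∃ L : List (Xb × Xb),
    (L.map fun p => boolEmb z p.1 + boolEmb z p.2).sum = u ∧ r = confLength L}

section confLength

variable {Xb : Type*} [MetricSpace Xb]

lemma confLength_cons (p : Xb × Xb) (L : List (Xb × Xb)) :
    confLength (p :: L) = max (dist p.1 p.2) (confLength L) := rfl

lemma confLength_nonneg (L : List (Xb × Xb)) : 0 ≤ confLength L := by
  induction L with
  | nil => rfl
  | cons p L ih => exact le_max_of_le_right ih

lemma dist_le_confLength {L : List (Xb × Xb)} {p : Xb × Xb} (hp : p ∈ L) :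
    dist p.1 p.2 ≤ confLength L := by
  induction L with
  | nil => cases hp
  | cons q L ih =>
    rcases List.mem_cons.1 hp with rfl | hp
    · exact le_max_left _ _
    · exact le_max_of_le_right (ih hp)

lemma confLength_append_le (L₁ L₂ : List (Xb × Xb)) :
    confLength (L₁ ++ L₂) ≤ max (confLength L₁) (confLength L₂) := by
  induction L₁ with
  | nil => exact le_max_right _ _
  | cons p L ih =>
    rw [List.cons_append, confLength_cons, confLength_cons, max_assoc]
    exact max_le_max le_rfl ih

lemma dist_lt_iff_of_dist_lt [IsUltrametricDist Xb] {a b x : Xb} {r : ℝ} (h : dist a b < r) :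
    dist a x < r ↔ dist b x < r := by
  constructor <;> intro hlt
  · exact (IsUltrametricDist.dist_triangle_max b a x).trans_lt
      (max_lt (by rwa [dist_comm]) hlt)
  · exact (IsUltrametricDist.dist_triangle_max a b x).trans_lt (max_lt h hlt)

end confLength

section confSum

variable {Xb : Type*} [DecidableEq Xb] {z : Xb}

noncomputable def confSum (z : Xb) (L : List (Xb × Xb)) : { y : Xb // y ≠ z } →₀ ZMod 2 :=
  (L.map fun p => boolEmb z p.1 + boolEmb z p.2).sum

lemma confSum_append (L₁ L₂ : List (Xb × Xb)) :
    confSum z (L₁ ++ L₂) = confSum z L₁ + confSum z L₂ := by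
  simp only [confSum, List.map_append, List.sum_append]

lemma boolEmb_self : boolEmb z z = 0 := dif_pos rfl

lemma boolEmb_coe (y : { y : Xb // y ≠ z }) : boolEmb z (y : Xb) = Finsupp.single y 1 :=
  dif_neg y.2

/-- Pair each point of the support with `z`. -/
lemma exists_confSum_eq (u : { y : Xb // y ≠ z } →₀ ZMod 2) : ∃ L, confSum z L = u := by
  induction u using Finsupp.induction with
  | zero => exact ⟨[], rfl⟩
  | single_add y c u _ hc ih =>
    obtain ⟨L, hL⟩ := ih
    obtain rfl : c = 1 := (by decide : ∀ c : ZMod 2, c ≠ 0 → c = 1) c hc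
    refine ⟨((y : Xb), z) :: L, ?_⟩
    rw [confSum, List.map_cons, List.sum_cons, ← confSum, hL, boolEmb_coe, boolEmb_self,
      add_zero]

end confSum

section graevNorm

variable {Xb : Type*} [MetricSpace Xb] [DecidableEq Xb] {z : Xb}
  {u : { y : Xb // y ≠ z } →₀ ZMod 2}

lemma graevNorm_eq_sInf (z : Xb) (u : { y : Xb // y ≠ z } →₀ ZMod 2) :
    graevNorm z u = sInf (confLength '' {L | confSum z L = u}) := by
  simp only [graevNorm, Set.image, eq_comm (a := (_ : ℝ)), confSum, Set.mem_ofPred_eq]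

lemma confLengths_nonempty (z : Xb) (u : { y : Xb // y ≠ z } →₀ ZMod 2) :
    (confLength '' {L | confSum z L = u}).Nonempty :=
  let ⟨L, hL⟩ := exists_confSum_eq u
  ⟨_, L, hL, rfl⟩

lemma graevNorm_le_confLength {L : List (Xb × Xb)} (hL : confSum z L = u) :
    graevNorm z u ≤ confLength L := by
  rw [graevNorm_eq_sInf]
  exact csInf_le ⟨0, Set.forall_mem_image.2 fun L _ => confLength_nonneg L⟩ ⟨L, hL, rfl⟩

lemma le_graevNorm {r : ℝ} (h : ∀ L, confSum z L = u → r ≤ confLength L) :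
    r ≤ graevNorm z u := by
  rw [graevNorm_eq_sInf]
  exact le_csInf (confLengths_nonempty z u) (Set.forall_mem_image.2 h)

lemma exists_confLength_lt_graevNorm_add {ε : ℝ} (hε : 0 < ε) :
    ∃ L, confSum z L = u ∧ confLength L < graevNorm z u + ε := by
  rw [graevNorm_eq_sInf]
  obtain ⟨_, ⟨L, hL, rfl⟩, hlt⟩ := Real.lt_sInf_add_pos (confLengths_nonempty z u) hε
  exact ⟨L, hL, hlt⟩

lemma graevNorm_zero : graevNorm z (0 : { y : Xb // y ≠ z } →₀ ZMod 2) = 0 :=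
  le_antisymm (graevNorm_le_confLength (L := []) rfl)
    (le_graevNorm fun L _ => confLength_nonneg L)

lemma graevNorm_add_le (u v : { y : Xb // y ≠ z } →₀ ZMod 2) :
    graevNorm z (u + v) ≤ max (graevNorm z u) (graevNorm z v) := by
  refine le_of_forall_pos_le_add fun ε hε => ?_
  obtain ⟨L₁, hL₁, hlt₁⟩ := exists_confLength_lt_graevNorm_add (u := u) hε
  obtain ⟨L₂, hL₂, hlt₂⟩ := exists_confLength_lt_graevNorm_add (u := v) hε
  calc graevNorm z (u + v)
      ≤ confLength (L₁ ++ L₂) :=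
        graevNorm_le_confLength (by rw [confSum_append, hL₁, hL₂])
    _ ≤ max (confLength L₁) (confLength L₂) := confLength_append_le L₁ L₂
    _ ≤ max (graevNorm z u + ε) (graevNorm z v + ε) := max_le_max hlt₁.le hlt₂.le
    _ = max (graevNorm z u) (graevNorm z v) + ε := max_add_add_right _ _ _

end graevNorm

section ballParity

variable {Xb : Type*} [MetricSpace Xb] {z : Xb} {r : ℝ}

variable (z) in
noncomputable def ballParity (x : Xb) (r : ℝ) :
    ({ y : Xb // y ≠ z } →₀ ZMod 2) →+ ZMod 2 :=
  Finsupp.liftAddHom fun y => if dist (y : Xb) x < r then AddMonoidHom.id (ZMod 2) else 0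

lemma ballParity_apply (x : Xb) (u : { y : Xb // y ≠ z } →₀ ZMod 2) :
    ballParity z x r u = ∑ y ∈ u.support, if dist (y : Xb) x < r then u y else 0 := by
  rw [ballParity, Finsupp.liftAddHom_apply, Finsupp.sum]
  refine Finset.sum_congr rfl fun y _ => ?_
  split_ifs <;> rfl

lemma ballParity_eq_apply (hr : 0 < r) {u : { y : Xb // y ≠ z } →₀ ZMod 2}
    {x : { y : Xb // y ≠ z }} (hx : ∀ y ∈ u.support, dist (y : Xb) x < r → y = x) :
    ballParity z x r u = u x := by
  rw [ballParity_apply, Finset.sum_eq_single x]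
  · exact if_pos (dist_self (x : Xb) ▸ hr)
  · intro y hy hyx
    exact if_neg fun hlt => hyx (hx y hy hlt)
  · intro hx'
    rw [Finsupp.notMem_support_iff.1 hx', ite_self]

variable [DecidableEq Xb] {x : Xb}

lemma ballParity_boolEmb (hz : ¬dist z x < r) (a : Xb) :
    ballParity z x r (boolEmb z a) = if dist a x < r then 1 else 0 := by
  by_cases ha : a = z
  · subst ha
    rw [boolEmb_self, map_zero, if_neg hz]
  · rw [show boolEmb z a = Finsupp.single ⟨a, ha⟩ 1 from boolEmb_coe ⟨a, ha⟩, ballParity,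
      Finsupp.liftAddHom_apply_single]
    split_ifs <;> rfl

lemma ballParity_confSum_eq_zero [IsUltrametricDist Xb] (hz : ¬dist z x < r)
    {L : List (Xb × Xb)} (hL : confLength L < r) : ballParity z x r (confSum z L) = 0 := by
  rw [confSum, map_list_sum, List.map_map]
  refine List.sum_eq_zero fun c hc => ?_
  obtain ⟨p, hp, rfl⟩ := List.mem_map.1 hc
  have hiff := dist_lt_iff_of_dist_lt (x := x) ((dist_le_confLength hp).trans_lt hL)
  simp only [Function.comp_apply, map_add, ballParity_boolEmb hz, hiff]
  split_ifs <;> decide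

end ballParity

lemma graevNorm_pos {Xb : Type*} [MetricSpace Xb] [IsUltrametricDist Xb] [DecidableEq Xb]
    {z : Xb} {u : { y : Xb // y ≠ z } →₀ ZMod 2} (hu : u ≠ 0) : 0 < graevNorm z u := by
  obtain ⟨x, hx⟩ := Finsupp.support_nonempty_iff.2 hu
  set S : Set Xb := insert z (Subtype.val '' (u.support : Set { y : Xb // y ≠ z })) \ {(x : Xb)}
  have hS : IsClosed S :=
    (((Finset.finite_toSet u.support).image _).insert z).sdiff.isClosed
  obtain ⟨r, hr, hball⟩ := Metric.isOpen_iff.1 hS.isOpen_compl x fun h => h.2 rfl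
  have hz : ¬dist z x < r := fun h =>
    hball h ⟨Set.mem_insert z _, fun h' => x.2 h'.symm⟩
  have hsupp : ∀ y ∈ u.support, dist (y : Xb) x < r → y = x := fun y hy hlt =>
    by_contra fun hyx => hball hlt
      ⟨Set.mem_insert_of_mem _ ⟨y, hy, rfl⟩, fun h => hyx (Subtype.ext h)⟩
  refine hr.trans_le (le_graevNorm fun L hL => not_lt.1 fun hlt => ?_)
  have hzero := ballParity_confSum_eq_zero hz hlt
  rw [hL, ballParity_eq_apply hr hsupp] at hzero
  exact Finsupp.mem_support_iff.1 hx hzero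

/-- Over an ultra-metric space `X̄` with distinguished point `z`, the
Graev-type norm on the free Boolean group `B(X)`, `X = X̄ \ {z}`, is an ultra-norm. -/
theorem graevNorm_is_ultranorm {Xb : Type*} [MetricSpace Xb] [DecidableEq Xb]
    (hultra : ∀ x y w : Xb, dist x w ≤ max (dist x y) (dist y w)) (z : Xb) :
    graevNorm z (0 : { y : Xb // y ≠ z } →₀ ZMod 2) = 0 ∧
    (∀ u : { y : Xb // y ≠ z } →₀ ZMod 2, u ≠ 0 → 0 < graevNorm z u) ∧
    (∀ u v : { y : Xb // y ≠ z } →₀ ZMod 2,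
      graevNorm z (u + v) ≤ max (graevNorm z u) (graevNorm z v)) := by
  have : IsUltrametricDist Xb := ⟨hultra⟩
  exact ⟨graevNorm_zero, fun _ => graevNorm_pos, graevNorm_add_le⟩
end
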